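/- arXiv:0712.3956 — 3 statements merged into one kernel-verified Lean document; each statement's English description precedes it below -/
import Mathlib

section
/- Every connected α-critical graph with at least 4 vertices has minimum degree at least 2. -/
open SimpleGraph

variable {V : Type*}

/-- The maximum size of an independent (stable) set of a simple graph. -/
noncomputable def alpha (G : SimpleGraph V) : ℕ :=
  sSup {n | ∃ s : Finset V, (∀ x ∈ s, ∀ y ∈ s, ¬ G.Adj x y) ∧ s.card = n}

/-- A graph is α-critical if deleting any edge increases α. -/
def AlphaCritical (G : SimpleGraph V) : Prop :=
  ∀ x y : V, G.Adj x y → alpha G < alpha (G.deleteEdges {s(x, y)})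

/-- `G` contains a totally odd K₄-subdivision: four distinct branch vertices joined by
six internally disjoint paths of odd length. -/
def HasTOK4 (G : SimpleGraph V) : Prop :=
  ∃ b : Fin 4 → V, Function.Injective b ∧
  ∃ P : ∀ i j : Fin 4, G.Walk (b i) (b j),
    (∀ i j, i ≠ j → (P i j).IsPath) ∧
    (∀ i j, i ≠ j → Odd (P i j).length) ∧
    (∀ i j k l : Fin 4, i ≠ j → k ≠ l → s(i, j) ≠ s(k, l) →
      ∀ v : V, v ∈ (P i j).support → v ∈ (P k l).support →
        (v = b i ∨ v = b j) ∧ (v = b k ∨ v = b l))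

/-- `G` is (isomorphic to) a totally odd K₄-subdivision: it has one that uses all
vertices and all edges of `G`. -/
def IsTOK4 (G : SimpleGraph V) : Prop :=
  ∃ b : Fin 4 → V, Function.Injective b ∧
  ∃ P : ∀ i j : Fin 4, G.Walk (b i) (b j),
    (∀ i j, i ≠ j → (P i j).IsPath) ∧
    (∀ i j, i ≠ j → Odd (P i j).length) ∧
    (∀ i j k l : Fin 4, i ≠ j → k ≠ l → s(i, j) ≠ s(k, l) →
      ∀ v : V, v ∈ (P i j).support → v ∈ (P k l).support →
        (v = b i ∨ v = b j) ∧ (v = b k ∨ v = b l)) ∧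
    (∀ v : V, ∃ i j, i ≠ j ∧ v ∈ (P i j).support) ∧
    (∀ e ∈ G.edgeSet, ∃ i j, i ≠ j ∧ e ∈ (P i j).edges)

/-- `G` is an odd cycle: a cycle of odd length passing through all vertices
and using all edges of `G`. -/
def IsOddCycle (G : SimpleGraph V) : Prop :=
  ∃ (v : V) (w : G.Walk v v), w.IsCycle ∧ Odd w.length ∧
    (∀ u : V, u ∈ w.support) ∧ (∀ e ∈ G.edgeSet, e ∈ w.edges)

/-- `G` is isomorphic to the complete graph on one vertex. -/
def IsK1 (G : SimpleGraph V) : Prop := Nonempty (G ≃g (⊤ : SimpleGraph (Fin 1)))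

/-- `G` is isomorphic to the complete graph on two vertices. -/
def IsK2 (G : SimpleGraph V) : Prop := Nonempty (G ≃g (⊤ : SimpleGraph (Fin 2)))

/-! Suppose `v` has degree at most one. Connectivity and `|V| ≥ 3` give a neighbour `u` of `v`
and a neighbour `w ≠ v` of `u`. By criticality a maximum independent set `T` of `G - uw` is
larger than `α(G)`, so it contains both `u` and `w`, hence not `v`; but then
`T - u + v` is independent in `G` and has the same size, a contradiction. -/

namespace SimpleGraph

variable {G : SimpleGraph V}

lemma alpha_eq_indepNum (G : SimpleGraph V) : alpha G = G.indepNum := by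
  unfold alpha indepNum
  congr 1
  ext n
  simp only [isNIndepSet_iff, isIndepSet_iff, Set.Pairwise, Finset.mem_coe]
  constructor
  · rintro ⟨s, hs, rfl⟩
    exact ⟨s, fun x hx y hy _ => hs x hx y hy, rfl⟩
  · rintro ⟨s, hs, rfl⟩
    refine ⟨s, fun x hx y hy => ?_, rfl⟩
    obtain rfl | hxy := eq_or_ne x y
    · exact G.irrefl
    · exact hs hx hy hxy

lemma isIndepSet_of_isIndepSet_deleteEdges {u w : V} {s : Set V}
    (hs : (G.deleteEdges {s(u, w)}).IsIndepSet s) (huw : ¬(u ∈ s ∧ w ∈ s)) :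
    G.IsIndepSet s := by
  intro x hx y hy hxy hadj
  refine hs hx hy hxy ((deleteEdges_adj ..).mpr ⟨hadj, fun h => huw ?_⟩)
  rcases Sym2.eq_iff.mp h with ⟨rfl, rfl⟩ | ⟨rfl, rfl⟩
  · exact ⟨hx, hy⟩
  · exact ⟨hy, hx⟩

lemma IsIndepSet.insert_of_neighborSet_subset {s : Set V} {u v : V} (hs : G.IsIndepSet s)
    (hu : u ∉ s) (hv : G.neighborSet v ⊆ {u}) : G.IsIndepSet (insert v s) := by
  refine hs.insert fun x hx _ => ⟨fun h => ?_, fun h => ?_⟩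
  · exact hu (hv h ▸ hx)
  · exact hu (hv h.symm ▸ hx)

lemma Preconnected.exists_adj_of_mem_of_notMem (hG : G.Preconnected) {S : Set V} {x y : V}
    (hx : x ∈ S) (hy : y ∉ S) :
    ∃ a ∈ S, ∃ b ∉ S, G.Adj a b := by
  obtain ⟨d, -, hd, hd'⟩ := (hG x y).some.exists_boundary_dart S hx hy
  exact ⟨d.fst, hd, d.snd, hd', d.adj⟩

end SimpleGraph

theorem AlphaCritical.eq_of_adj_of_neighborSet_subset [Finite V] {G : SimpleGraph V}
    (hG : AlphaCritical G) {u v w : V} (huw : G.Adj u w) (huv : G.Adj u v)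
    (hv : G.neighborSet v ⊆ {u}) : v = w := by
  classical
  by_contra hvw
  have hlt := hG u w huw
  rw [alpha_eq_indepNum, alpha_eq_indepNum] at hlt
  obtain ⟨T, hT, hTcard⟩ := (G.deleteEdges {s(u, w)}).exists_isNIndepSet_indepNum
  have huwT : u ∈ T ∧ w ∈ T := by
    by_contra h
    have := (isIndepSet_of_isIndepSet_deleteEdges hT (by simpa using h)).card_le_indepNum
    omega
  have hvT : v ∉ T := fun hvT =>
    hT huwT.1 hvT (G.ne_of_adj huv)
      ((deleteEdges_adj ..).mpr ⟨huv, fun h => hvw (Sym2.congr_right.mp h)⟩)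
  have hswap : G.IsIndepSet ↑(insert v (T.erase u)) := by
    rw [Finset.coe_insert]
    refine IsIndepSet.insert_of_neighborSet_subset ?_ (by simp) hv
    exact isIndepSet_of_isIndepSet_deleteEdges (hT.mono (by simp)) (by simp)
  have hcard : (insert v (T.erase u)).card = T.card := by
    rw [Finset.card_insert_of_notMem (fun h => hvT (Finset.mem_of_mem_erase h)),
      Finset.card_erase_add_one huwT.1]
  have := hswap.card_le_indepNum
  omega

theorem stmt_1 {V : Type*} [Fintype V] (G : SimpleGraph V) (hconn : G.Connected)
    (hG : AlphaCritical G) (hcard : 4 ≤ Fintype.card V) (v : V) :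
    2 ≤ (G.neighborSet v).ncard := by
  classical
  by_contra! hdeg
  have : Nontrivial V := Fintype.one_lt_card_iff_nontrivial.mp (by omega)
  obtain ⟨u, hvu⟩ := hconn.preconnected.exists_adj_of_nontrivial v
  have hv : G.neighborSet v ⊆ {u} := fun y hy =>
    Set.ncard_le_one_iff_subsingleton.mp (by omega) hy hvu
  obtain ⟨z, -, hz⟩ := Finset.exists_mem_notMem_of_card_lt_card (s := {u, v}) (t := Finset.univ)
    (Finset.card_le_two.trans_lt (by simp only [Finset.card_univ]; omega))
  obtain ⟨a, ha, b, hb, hab⟩ := hconn.preconnected.exists_adj_of_mem_of_notMem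
    (S := {u, v}) (x := u) (y := z) (by simp) (by simpa using hz)
  rcases ha with rfl | rfl
  · exact hb (Or.inr (hG.eq_of_adj_of_neighborSet_subset hab hvu.symm hv).symm)
  · exact hb (Or.inl (hv hab))
end

section
/- Every connected cubic triangle-free graph with no subgraph isomorphic to K_{2,3}, in which every two incident edges lie on a common cycle of length 4, is isomorphic to the graph of the cube Q₃. -/
open SimpleGraph

variable {V : Type*}

/-- The 3-dimensional hypercube graph: vertices are triples of bits, adjacent iff
they differ in exactly one coordinate. -/
def Q3 : SimpleGraph (Fin 3 → Bool) :=
  SimpleGraph.fromRel (fun a b => ∃! i : Fin 3, a i ≠ b i)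

/-!
Fix a vertex `v₀` with neighbours `a, b, c`. The 4-cycle condition gives common neighbours
`p` of `a, b`, `q` of `a, c` and `r` of `b, c` other than `v₀`; they are pairwise distinct
because `v₀` and any one of them cannot share all of `a, b, c` (no `K_{2,3}`). A common
neighbour `w ≠ a` of `p` and `q` is adjacent to `r` as well: the 4-cycle condition at `b, p, w`
gives a common neighbour of `b` and `w` other than `p`, and it cannot be `v₀`, which would share
`a, b, w` with `p`. This gives an injective homomorphism `Q₃ → G`; as both graphs are
cubic it maps each neighbourhood onto a neighbourhood, so its image is closed under adjacency
and, `G` being connected, it is an isomorphism.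
-/

namespace SimpleGraph.Copy

variable {W : Type*} {H : SimpleGraph W} {G : SimpleGraph V}

theorem image_neighborSet (f : Copy H G) {x : W} (hfin : (H.neighborSet x).Finite)
    (hdeg : (G.neighborSet (f x)).encard ≤ (H.neighborSet x).encard) :
    f '' H.neighborSet x = G.neighborSet (f x) := by
  have hf : Function.Injective f := f.injective
  refine (hfin.image f).eq_of_subset_of_encard_le ?_ (by rwa [hf.encard_image])
  rintro _ ⟨y, hy, rfl⟩
  exact f.toHom.map_adj hy

theorem surjective_of_preconnected [Nonempty W] (f : Copy H G) (hG : G.Preconnected)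
    (hnbr : ∀ x, G.neighborSet (f x) ⊆ f '' H.neighborSet x) : Function.Surjective f := by
  have hclosed {u v : V} (p : G.Walk u v) : v ∈ Set.range f → u ∈ Set.range f := by
    induction p with
    | nil => exact fun h => h
    | cons huv _ ih =>
      intro hv
      obtain ⟨x, hx⟩ := ih hv
      obtain ⟨y, -, rfl⟩ := hnbr x (hx ▸ huv.symm : G.Adj (f x) _)
      exact ⟨y, rfl⟩
  intro u
  obtain ⟨x⟩ := ‹Nonempty W›
  exact hclosed (hG u (f x)).some ⟨x, rfl⟩

theorem nonempty_iso_of_connected [Nonempty W] (f : Copy H G) (hG : G.Connected)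
    (hfin : ∀ x, (H.neighborSet x).Finite)
    (hdeg : ∀ x, (G.neighborSet (f x)).encard ≤ (H.neighborSet x).encard) :
    Nonempty (H ≃g G) := by
  have himage x := f.image_neighborSet (hfin x) (hdeg x)
  have hsurj := f.surjective_of_preconnected hG.preconnected fun x => (himage x).ge
  refine ⟨⟨Equiv.ofBijective f ⟨f.injective, hsurj⟩, fun {x y} => ⟨fun hxy => ?_, f.toHom.map_adj⟩⟩⟩
  obtain ⟨z, hz, hzy⟩ := (himage x).ge (hxy : f y ∈ G.neighborSet (f x))
  rwa [← f.injective hzy]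

end SimpleGraph.Copy

theorem Q3_adj_iff {x y : Fin 3 → Bool} :
    Q3.Adj x y ↔ ∃ i, y = Function.update x i (!x i) := by
  revert x y
  simp only [Q3, fromRel_adj, ExistsUnique]
  decide

theorem encard_neighborSet_Q3 (x : Fin 3 → Bool) : (Q3.neighborSet x).encard = 3 := by
  have hflip : Function.Injective fun i => Function.update x i (!x i) := by
    revert x
    unfold Function.Injective
    decide
  have hnbr : Q3.neighborSet x = Set.range fun i => Function.update x i (!x i) := by
    ext y
    simp [Q3_adj_iff, eq_comm]
  rw [hnbr, ← Set.image_univ, hflip.encard_image, Set.encard_univ]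
  simp

def cubeMap (v₀ a b c p q r w : V) (x : Fin 3 → Bool) : V :=
  match x 0, x 1, x 2 with
  | false, false, false => v₀
  | true, false, false => a
  | false, true, false => b
  | false, false, true => c
  | true, true, false => p
  | true, false, true => q
  | false, true, true => r
  | true, true, true => w

section CubeMap

variable {G : SimpleGraph V} {v₀ a b c p q r w : V}

theorem cubeMap_injective (h : [v₀, a, b, c, p, q, r, w].Nodup) :
    Function.Injective (cubeMap v₀ a b c p q r w) := by
  simp only [List.nodup_cons, List.mem_cons, List.not_mem_nil, List.nodup_nil] at h
  intro x y hxy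
  funext i
  revert hxy
  cases hx0 : x 0 <;> cases hx1 : x 1 <;> cases hx2 : x 2 <;>
    cases hy0 : y 0 <;> cases hy1 : y 1 <;> cases hy2 : y 2 <;>
    fin_cases i <;> simp_all [cubeMap] <;> rintro rfl <;> simp_all

theorem cubeMap_adj (h₀a : G.Adj v₀ a) (h₀b : G.Adj v₀ b) (h₀c : G.Adj v₀ c)
    (hap : G.Adj a p) (haq : G.Adj a q) (hbp : G.Adj b p) (hbr : G.Adj b r)
    (hcq : G.Adj c q) (hcr : G.Adj c r) (hpw : G.Adj p w) (hqw : G.Adj q w) (hrw : G.Adj r w)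
    {x y : Fin 3 → Bool} (hxy : Q3.Adj x y) :
    G.Adj (cubeMap v₀ a b c p q r w x) (cubeMap v₀ a b c p q r w y) := by
  obtain ⟨i, rfl⟩ := Q3_adj_iff.1 hxy
  cases hx0 : x 0 <;> cases hx1 : x 1 <;> cases hx2 : x 2 <;> fin_cases i <;>
    simp [cubeMap, G.adj_comm, *]

end CubeMap

section CubicGraph

variable {G : SimpleGraph V}

theorem adj_iff_of_ncard_neighborSet_eq_three {v a b c : V} (h3 : (G.neighborSet v).ncard = 3)
    (hab : a ≠ b) (hac : a ≠ c) (hbc : b ≠ c) (ha : G.Adj v a) (hb : G.Adj v b)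
    (hc : G.Adj v c) (x : V) : G.Adj v x ↔ x = a ∨ x = b ∨ x = c := by
  have hsub : {a, b, c} ⊆ G.neighborSet v := by
    rintro _ (rfl | rfl | rfl) <;> assumption
  have hcard : ({a, b, c} : Set V).ncard = 3 :=
    Set.ncard_eq_three.2 ⟨a, b, c, hab, hac, hbc, rfl⟩
  have heq := Set.eq_of_subset_of_ncard_le hsub (by rw [h3, hcard])
    (Set.finite_of_ncard_ne_zero (by rw [h3]; decide))
  rw [← mem_neighborSet, ← heq]
  rfl

theorem not_adj_of_cliqueFree_three (htf : G.CliqueFree 3) {v x y : V} (hx : G.Adj v x)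
    (hy : G.Adj v y) : ¬ G.Adj x y := fun hxy =>
  isIndepSet_neighborSet_of_triangleFree G htf v hx hy hxy.ne hxy

theorem not_adj_of_two_common_neighbors
    (hK23 : ¬ ∃ (s : Fin 2 → V) (t : Fin 3 → V), Function.Injective s ∧ Function.Injective t ∧
      (∀ i j, s i ≠ t j) ∧ ∀ i j, G.Adj (s i) (t j))
    {u v a b c : V} (huv : u ≠ v) (hab : a ≠ b) (hac : a ≠ c) (hbc : b ≠ c)
    (hua : G.Adj u a) (hub : G.Adj u b) (huc : G.Adj u c)
    (hva : G.Adj v a) (hvb : G.Adj v b) : ¬ G.Adj v c := by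
  intro hvc
  have hadj : ∀ i j, G.Adj (![u, v] i) (![a, b, c] j) := by
    intro i j
    fin_cases i <;> fin_cases j <;> assumption
  refine hK23 ⟨![u, v], ![a, b, c], ?_, ?_, fun i j => (hadj i j).ne, hadj⟩ <;>
    intro i j <;> fin_cases i <;> fin_cases j <;> simp [*, Ne.symm]

theorem exists_copy_Q3 (hcubic : ∀ v : V, (G.neighborSet v).ncard = 3)
    (htf : G.CliqueFree 3)
    (hK23 : ¬ ∃ (a : Fin 2 → V) (b : Fin 3 → V),
      Function.Injective a ∧ Function.Injective b ∧
      (∀ i j, a i ≠ b j) ∧ (∀ i j, G.Adj (a i) (b j)))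
    (hC4 : ∀ u v w : V, G.Adj u v → G.Adj v w → u ≠ w →
      ∃ z : V, z ≠ v ∧ G.Adj u z ∧ G.Adj z w)
    (v₀ : V) : Nonempty (Q3.Copy G) := by
  have htri := @not_adj_of_cliqueFree_three _ G htf
  have hK := @not_adj_of_two_common_neighbors _ G hK23
  obtain ⟨a, b, c, hab, hac, hbc, hN₀⟩ := Set.ncard_eq_three.1 (hcubic v₀)
  have h₀a : G.Adj v₀ a := by simp [← mem_neighborSet, hN₀]
  have h₀b : G.Adj v₀ b := by simp [← mem_neighborSet, hN₀]
  have h₀c : G.Adj v₀ c := by simp [← mem_neighborSet, hN₀]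
  obtain ⟨p, hp₀, hap, hpb⟩ := hC4 a v₀ b h₀a.symm h₀b hab
  obtain ⟨q, hq₀, haq, hqc⟩ := hC4 a v₀ c h₀a.symm h₀c hac
  obtain ⟨r, hr₀, hbr, hrc⟩ := hC4 b v₀ c h₀b.symm h₀c hbc
  have hpc : ¬ G.Adj p c := hK hp₀.symm hab hac hbc h₀a h₀b h₀c hap.symm hpb
  have hqb : ¬ G.Adj q b := hK hq₀.symm hac hab hbc.symm h₀a h₀c h₀b haq.symm hqc
  have hpq : p ≠ q := by rintro rfl; exact hpc hqc
  have hpr : p ≠ r := by rintro rfl; exact hpc hrc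
  have hqr : q ≠ r := by rintro rfl; exact hqb hbr.symm
  have hcp : c ≠ p := by rintro rfl; exact htri h₀a h₀c hap
  have hbq : b ≠ q := by rintro rfl; exact htri h₀a h₀b haq
  have har : a ≠ r := by rintro rfl; exact htri h₀b h₀a hbr
  obtain ⟨w, hwa, hpw, hwq⟩ := hC4 p a q hap.symm haq hpq
  have hw₀ : w ≠ v₀ := by rintro rfl; exact htri h₀a hpw.symm hap
  have hwb : w ≠ b := by
    rintro rfl; exact hK hab hp₀.symm hq₀.symm hpq h₀a.symm hap haq h₀b.symm hpb.symm hwq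
  have hwc : w ≠ c := by
    rintro rfl
    exact hK hac hq₀.symm hp₀.symm hpq.symm h₀a.symm haq hap h₀c.symm hqc.symm hpw.symm
  have hrw : G.Adj r w := by
    obtain ⟨z, hzp, hbz, hzw⟩ := hC4 b p w hpb.symm hpw hwb.symm
    rcases (adj_iff_of_ncard_neighborSet_eq_three (hcubic b) hp₀.symm hr₀.symm hpr
      h₀b.symm hpb.symm hbr z).1 hbz with rfl | rfl | rfl
    · exact absurd hzw (hK hp₀ hab hwa.symm hwb.symm hap.symm hpb hpw h₀a h₀b)
    · exact absurd rfl hzp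
    · exact hzw
  have hwr : w ≠ r := by
    rintro rfl
    rcases (adj_iff_of_ncard_neighborSet_eq_three (hcubic w) hpq hpb.ne hbq.symm
      hpw.symm hwq hbr.symm c).1 hrc with h | h | h
    exacts [hcp h, hqc.ne' h, hbc h.symm]
  refine ⟨⟨⟨cubeMap v₀ a b c p q r w, cubeMap_adj h₀a h₀b h₀c hap haq hpb.symm hbr hqc.symm
    hrc.symm hpw hwq.symm hrw⟩, cubeMap_injective ?_⟩⟩
  simp only [List.nodup_cons, List.mem_cons, List.not_mem_nil, List.nodup_nil]
  grind [Adj.ne]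

end CubicGraph

theorem stmt_14_general {V : Type*} (G : SimpleGraph V) (hconn : G.Connected)
    (hcubic : ∀ v : V, (G.neighborSet v).ncard = 3)
    (htf : G.CliqueFree 3)
    (hK23 : ¬ ∃ (a : Fin 2 → V) (b : Fin 3 → V),
      Function.Injective a ∧ Function.Injective b ∧
      (∀ i j, a i ≠ b j) ∧ (∀ i j, G.Adj (a i) (b j)))
    (hC4 : ∀ u v w : V, G.Adj u v → G.Adj v w → u ≠ w →
      ∃ z : V, z ≠ v ∧ G.Adj u z ∧ G.Adj z w) :
    Nonempty (G ≃g Q3) := by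
  obtain ⟨v₀⟩ := hconn.nonempty
  obtain ⟨f⟩ := exists_copy_Q3 hcubic htf hK23 hC4 v₀
  have hdeg (x : Fin 3 → Bool) :
      (G.neighborSet (f x)).encard ≤ (Q3.neighborSet x).encard := by
    rw [encard_neighborSet_Q3, Set.encard_eq_three.2 (Set.ncard_eq_three.1 (hcubic _))]
  obtain ⟨e⟩ := f.nonempty_iso_of_connected hconn (fun _ => Set.toFinite _) hdeg
  exact ⟨e.symm⟩

theorem stmt_14 {V : Type*} [Fintype V] (G : SimpleGraph V) (hconn : G.Connected)
    (hcubic : ∀ v : V, (G.neighborSet v).ncard = 3)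
    (htf : G.CliqueFree 3)
    (hK23 : ¬ ∃ (a : Fin 2 → V) (b : Fin 3 → V),
      Function.Injective a ∧ Function.Injective b ∧
      (∀ i j, a i ≠ b j) ∧ (∀ i j, G.Adj (a i) (b j)))
    (hC4 : ∀ u v w : V, G.Adj u v → G.Adj v w → u ≠ w →
      ∃ z : V, z ≠ v ∧ G.Adj u z ∧ G.Adj z w) :
    Nonempty (G ≃g Q3) :=
  stmt_14_general G hconn hcubic htf hK23 hC4
end

section
/- Let G be a graph with a vertex x whose neighborhood includes three consecutive vertices of an induced subgraph that is an odd cycle C covering all vertices of G except x, with deg(x) = 3 in G. Then G contains (indeed, is) a totally odd K₄-subdivision. -/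
open SimpleGraph

variable {V : Type*}

/-!
The four branch vertices are `x` and its neighbours `a, b, c` (consecutive on `C`). Five of the
six branch paths are the single edges `xa, xb, xc, ab, bc`; the sixth is the rest of `C`, from `c`
back to `a` avoiding `b`, which has odd length `|C| - 2`. These paths meet only at branch vertices
and cover every vertex and edge of `G`.
-/

namespace SimpleGraph

namespace Walk

variable {G : SimpleGraph V} {v : V}

lemma support_drop_append_take {w : G.Walk v v} {i : ℕ} (hi : i + 2 ≤ w.length) :
    ((w.drop (i + 2)).append (w.take i)).support =
      w.support.tail.drop (i + 1) ++ w.support.tail.take i := by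
  rw [support_append, drop_support_eq_support_drop_min, support_take, min_eq_left hi,
    List.tail_take_eq_take_tail, ← w.cons_tail_support, List.drop_succ_cons]
  simp

lemma IsCycle.exists_isPath_skipping_getVert_succ {w : G.Walk v v} (hw : w.IsCycle) {i : ℕ}
    (hi : i + 2 ≤ w.length) :
    ∃ p : G.Walk (w.getVert (i + 2)) (w.getVert i), p.IsPath ∧ p.length + 2 = w.length ∧
      (∀ u, u ∈ p.support ↔ u ∈ w.support ∧ u ≠ w.getVert (i + 1)) ∧
      ∀ e ∈ w.edges, e = s(w.getVert i, w.getVert (i + 1)) ∨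
        e = s(w.getVert (i + 1), w.getVert (i + 2)) ∨ e ∈ p.edges := by
  classical
  set t := w.support.tail
  have ht : t.Nodup := hw.support_nodup
  have hit : i < t.length := by simp only [t, List.length_tail, length_support]; omega
  have hti : t[i] = w.getVert (i + 1) := by
    simp only [t, List.getElem_tail, support_getElem_eq_getVert]
  -- cut `t` at `t[i]` and swap the two pieces
  have hsupp : ((w.drop (i + 2)).append (w.take i)).support.Perm (t.erase t[i]) := by
    rw [support_drop_append_take hi, ht.erase_getElem, List.eraseIdx_eq_take_drop_succ]
    exact List.perm_append_comm
  refine ⟨(w.drop (i + 2)).append (w.take i), ?_, ?_, fun u => ?_, fun e he => ?_⟩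
  · exact IsPath.mk' (hsupp.nodup_iff.mpr (ht.erase _))
  · simp only [length_append, drop_length, take_length]; omega
  · rw [hsupp.mem_iff, ht.mem_erase_iff, hti, w.mem_support_iff]
    have := end_mem_tail_support hw.not_nil
    grind
  · have hlen : i + 1 < w.edges.length := by rw [length_edges]; omega
    rw [← List.take_append_drop i w.edges, List.mem_append,
      List.drop_eq_getElem_cons (by omega), List.drop_eq_getElem_cons hlen,
      getElem_edges, getElem_edges] at he
    rw [edges_append, edges_drop, edges_take, List.mem_append]
    grind

end Walk

variable {G : SimpleGraph V}

lemma mem_support_both_of_all_but_one_short {ι : Type*} {b : ι → V}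
    {P : ∀ i j, G.Walk (b i) (b j)} (e₀ : Sym2 ι)
    (hshort : ∀ i j, s(i, j) ≠ e₀ → ∀ u ∈ (P i j).support, u = b i ∨ u = b j)
    (hlong : ∀ i j, s(i, j) = e₀ → ∀ u ∈ (P i j).support, u ∈ Set.range b →
      u = b i ∨ u = b j)
    {i j k l : ι} (hne : s(i, j) ≠ s(k, l)) {u : V} (hij : u ∈ (P i j).support)
    (hkl : u ∈ (P k l).support) :
    (u = b i ∨ u = b j) ∧ (u = b k ∨ u = b l) := by
  have mem_range : ∀ {m n}, (u = b m ∨ u = b n) → u ∈ Set.range b := by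
    rintro m n (rfl | rfl) <;> exact ⟨_, rfl⟩
  by_cases h₀ : s(i, j) = e₀
  · have hkl := hshort k l (h₀ ▸ hne.symm) u hkl
    exact ⟨hlong i j h₀ u hij (mem_range hkl), hkl⟩
  by_cases h₀' : s(k, l) = e₀
  · have hij := hshort i j h₀ u hij
    exact ⟨hij, hlong k l h₀' u hkl (mem_range hij)⟩
  exact ⟨hshort i j h₀ u hij, hshort k l h₀' u hkl⟩

section K4

variable {x a b c : V} (hxa : G.Adj x a) (hxb : G.Adj x b) (hxc : G.Adj x c) (hab : G.Adj a b)
  (hbc : G.Adj b c) (g : G.Walk c a)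

/-- The six branch paths of `K₄` on `x, a, b, c` with the edge `ac` replaced by `g`. -/
def k4Paths : ∀ i j : Fin 4, G.Walk (![x, a, b, c] i) (![x, a, b, c] j)
  | 0, 1 => hxa.toWalk
  | 0, 2 => hxb.toWalk
  | 0, 3 => hxc.toWalk
  | 1, 2 => hab.toWalk
  | 1, 3 => g.reverse
  | 2, 3 => hbc.toWalk
  | 1, 0 => hxa.symm.toWalk
  | 2, 0 => hxb.symm.toWalk
  | 3, 0 => hxc.symm.toWalk
  | 2, 1 => hab.symm.toWalk
  | 3, 1 => g
  | 3, 2 => hbc.symm.toWalk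
  | 0, 0 | 1, 1 | 2, 2 | 3, 3 => .nil

lemma mem_support_k4Paths_of_ne {i j : Fin 4} (hij : s(i, j) ≠ s(1, 3)) {u : V}
    (hu : u ∈ (k4Paths hxa hxb hxc hab hbc g i j).support) :
    u = ![x, a, b, c] i ∨ u = ![x, a, b, c] j := by
  fin_cases i <;> fin_cases j <;> simp [k4Paths] at hij hu ⊢ <;> tauto

lemma mem_support_k4Paths_of_eq (hxg : x ∉ g.support) (hbg : b ∉ g.support) {i j : Fin 4}
    (hij : s(i, j) = s(1, 3)) {u : V} (hu : u ∈ (k4Paths hxa hxb hxc hab hbc g i j).support)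
    (hub : u ∈ Set.range ![x, a, b, c]) :
    u = ![x, a, b, c] i ∨ u = ![x, a, b, c] j := by
  obtain ⟨m, rfl⟩ := hub
  rcases Sym2.eq_iff.mp hij with ⟨rfl, rfl⟩ | ⟨rfl, rfl⟩ <;>
    fin_cases m <;> simp [k4Paths] at hu ⊢ <;> tauto

end K4

theorem isTOK4_of_isPath_odd {x a b c : V} (hxa : G.Adj x a) (hxb : G.Adj x b)
    (hxc : G.Adj x c) (hab : G.Adj a b) (hbc : G.Adj b c) {g : G.Walk c a} (hg : g.IsPath)
    (hodd : Odd g.length) (hxg : x ∉ g.support) (hbg : b ∉ g.support)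
    (hV : ∀ u, u = x ∨ u = b ∨ u ∈ g.support)
    (hE : ∀ e ∈ G.edgeSet, e = s(x, a) ∨ e = s(x, b) ∨ e = s(x, c) ∨ e = s(a, b) ∨
      e = s(b, c) ∨ e ∈ g.edges) :
    IsTOK4 G := by
  have hac : a ≠ c := by
    rintro rfl
    rw [Walk.isPath_iff_nil, ← Walk.length_eq_zero_iff] at hg
    simp [hg] at hodd
  refine ⟨![x, a, b, c], ?_, k4Paths hxa hxb hxc hab hbc g, ?_, ?_, ?_, ?_, ?_⟩
  · intro i j hij
    fin_cases i <;> fin_cases j <;>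
      simp [hxa.ne, hxb.ne, hxc.ne, hab.ne, hbc.ne, hac, hxa.ne', hxb.ne', hxc.ne', hab.ne',
        hbc.ne', hac.symm] at hij ⊢
  · intro i j hij
    fin_cases i <;> fin_cases j <;>
      simp [k4Paths, hg, hxa.ne, hxb.ne, hxc.ne, hab.ne, hbc.ne, hxa.ne', hxb.ne', hxc.ne',
        hab.ne', hbc.ne'] at hij ⊢
  · intro i j hij
    fin_cases i <;> fin_cases j <;> simp [k4Paths, hodd] at hij ⊢
  · intro i j k l _ _ hne u
    exact mem_support_both_of_all_but_one_short s(1, 3)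
      (fun i j h _ => mem_support_k4Paths_of_ne hxa hxb hxc hab hbc g h)
      (fun i j h _ => mem_support_k4Paths_of_eq hxa hxb hxc hab hbc g hxg hbg h) hne
  · intro u
    rcases hV u with rfl | rfl | hu
    · exact ⟨0, 1, by decide, by simp [k4Paths]⟩
    · exact ⟨1, 2, by decide, by simp [k4Paths]⟩
    · exact ⟨3, 1, by decide, hu⟩
  · intro e he
    rcases hE e he with rfl | rfl | rfl | rfl | rfl | he
    · exact ⟨0, 1, by decide, by simp [k4Paths]⟩
    · exact ⟨0, 2, by decide, by simp [k4Paths]⟩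
    · exact ⟨0, 3, by decide, by simp [k4Paths]⟩
    · exact ⟨1, 2, by decide, by simp [k4Paths]⟩
    · exact ⟨2, 3, by decide, by simp [k4Paths]⟩
    · exact ⟨3, 1, by decide, he⟩

end SimpleGraph

theorem stmt_17_general {V : Type*} (G : SimpleGraph V) (x v : V)
    (w : G.Walk v v) (hcyc : w.IsCycle) (hodd : Odd w.length)
    (hcov : ∀ u : V, u ≠ x → u ∈ w.support) (hx : x ∉ w.support)
    (i : ℕ) (hi : i + 2 < w.length)
    (hN : G.neighborSet x = {w.getVert i, w.getVert (i + 1), w.getVert (i + 2)})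
    (hE : ∀ e ∈ G.edgeSet, e ∈ w.edges ∨ ∃ u : V, e = s(x, u)) :
    IsTOK4 G := by
  have hxN : ∀ u, G.Adj x u ↔
      u = w.getVert i ∨ u = w.getVert (i + 1) ∨ u = w.getVert (i + 2) := by
    intro u
    rw [← mem_neighborSet, hN]
    rfl
  obtain ⟨p, hp, hlen, hsupp, hedges⟩ := hcyc.exists_isPath_skipping_getVert_succ hi.le
  refine isTOK4_of_isPath_odd ((hxN _).2 (.inl rfl)) ((hxN _).2 (.inr (.inl rfl)))
    ((hxN _).2 (.inr (.inr rfl))) (w.adj_getVert_succ (by omega))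
    (w.adj_getVert_succ (by omega)) hp ?_ (fun h => hx ((hsupp x).1 h).1)
    (fun h => ((hsupp _).1 h).2 rfl) (fun u => ?_) (fun e he => ?_)
  · rw [← hlen] at hodd
    simpa [Nat.odd_add] using hodd
  · by_cases hux : u = x
    · exact .inl hux
    by_cases hub : u = w.getVert (i + 1)
    · exact .inr (.inl hub)
    exact .inr (.inr ((hsupp u).2 ⟨hcov u hux, hub⟩))
  · rcases hE e he with hw | ⟨u, rfl⟩
    · exact .inr (.inr (.inr (hedges e hw)))
    · rcases (hxN u).1 he with rfl | rfl | rfl <;> simp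

theorem stmt_17 {V : Type*} [Fintype V] (G : SimpleGraph V) (x v : V)
    (w : G.Walk v v) (hcyc : w.IsCycle) (hodd : Odd w.length)
    (hcov : ∀ u : V, u ≠ x → u ∈ w.support) (hx : x ∉ w.support)
    (hdeg : (G.neighborSet x).ncard = 3)
    (i : ℕ) (hi : i + 2 < w.length)
    (hN : G.neighborSet x = {w.getVert i, w.getVert (i + 1), w.getVert (i + 2)})
    (hE : ∀ e ∈ G.edgeSet, e ∈ w.edges ∨ ∃ u : V, e = s(x, u)) :
    IsTOK4 G :=
  stmt_17_general G x v w hcyc hodd hcov hx i hi hN hE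
end
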